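/- There exists a constant $c>0$ such that for all $n\in\mathbb{N}$ and all $w\in\mathbb{Z}_n^d\setminus\{0\}$: $\frac{1}{\|\pi w\|^4} \le n^{-4}\Big(\sum_{i=1}^d \sin^2\big(\tfrac{\pi w_i}{n}\big)\Big)^{-2} \le \Big(\frac{1}{\|\pi w\|^2}+\frac{c}{n^2}\Big)^2$. -/

import Mathlib

/-! Put `xᵢ = π wᵢ / n`, `S = ∑ xᵢ² = π² ‖w‖² / n²` and `Q = ∑ sin² xᵢ`, so that the middle term
is `(n² Q)⁻²` and the outer ones are built from `(n² S)⁻¹`. From `sin² x ≤ x²` we get `Q ≤ S`.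
Since `|xᵢ| ≤ π/2`, Jordan's inequality gives `Q ≥ 4S/π²`, and `sin² x ≥ x² - x⁴/3` gives
`S - Q ≤ S²/3`; hence `1/Q - 1/S = (S - Q)/(S Q) ≤ π²/12`, and `c = π²/12` works. -/

open Real Finset

namespace Real

lemma sq_sub_sin_sq_le (x : ℝ) : x ^ 2 - sin x ^ 2 ≤ x ^ 4 / 3 := by
  have h_add : |x + sin x| ≤ 2 * |x| :=
    (abs_add_le _ _).trans (by linarith [abs_sin_le_abs (x := x)])
  calc x ^ 2 - sin x ^ 2 = (x - sin x) * (x + sin x) := by ring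
    _ ≤ |x - sin x| * |x + sin x| := (le_abs_self _).trans_eq (abs_mul _ _)
    _ ≤ |x| ^ 3 / 6 * (2 * |x|) := by gcongr; exact abs_sub_sin_le x
    _ = x ^ 4 / 3 := by rw [← Even.pow_abs (by decide : Even 4)]; ring

lemma mul_sq_le_sin_sq {x : ℝ} (hx : |x| ≤ π / 2) : (2 / π) ^ 2 * x ^ 2 ≤ sin x ^ 2 := by
  simpa [mul_pow, sq_abs] using pow_le_pow_left₀ (by positivity) (mul_abs_le_abs_sin hx) 2

lemma abs_pi_mul_div_le {a b : ℝ} (hb : 0 < b) (hab : 2 * |a| ≤ b) : |π * a / b| ≤ π / 2 := by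
  rw [abs_div, abs_mul, abs_of_pos pi_pos, abs_of_pos hb, div_le_iff₀ hb]
  nlinarith [pi_pos]

end Real

section SumSinSq

variable {ι : Type*} [Fintype ι] {x : ι → ℝ}

lemma mul_sum_sq_le_sum_sin_sq (hx : ∀ i, |x i| ≤ π / 2) :
    (2 / π) ^ 2 * ∑ i, x i ^ 2 ≤ ∑ i, sin (x i) ^ 2 := by
  rw [mul_sum]
  exact sum_le_sum fun i _ ↦ mul_sq_le_sin_sq (hx i)

lemma sum_sq_sub_sum_sin_sq_le :
    ∑ i, x i ^ 2 - ∑ i, sin (x i) ^ 2 ≤ (∑ i, x i ^ 2) ^ 2 / 3 := calc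
  _ = ∑ i, (x i ^ 2 - sin (x i) ^ 2) := by rw [sum_sub_distrib]
  _ ≤ ∑ i, (x i ^ 2) ^ 2 / 3 :=
    sum_le_sum fun i _ ↦ by rw [← pow_mul]; exact sq_sub_sin_sq_le _
  _ ≤ (∑ i, x i ^ 2) ^ 2 / 3 := by
    rw [← sum_div]; gcongr; exact sum_sq_le_sq_sum_of_nonneg fun i _ ↦ sq_nonneg _

lemma inv_sum_sin_sq_le (hx : ∀ i, |x i| ≤ π / 2) (hS : 0 < ∑ i, x i ^ 2) :
    (∑ i, sin (x i) ^ 2)⁻¹ ≤ (∑ i, x i ^ 2)⁻¹ + π ^ 2 / 12 := by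
  have hQS := mul_sum_sq_le_sum_sin_sq hx
  have hgap := sum_sq_sub_sum_sin_sq_le (x := x)
  set S := ∑ i, x i ^ 2
  set Q := ∑ i, sin (x i) ^ 2
  have hQ : 0 < Q := lt_of_lt_of_le (by positivity) hQS
  have hSQ : 4 * S ≤ π ^ 2 * Q := by
    have := pi_pos
    field_simp at hQS; linarith
  calc Q⁻¹ = S⁻¹ + (S - Q) / (S * Q) := by field_simp; ring
    _ ≤ S⁻¹ + S ^ 2 / 3 / (S * Q) := by gcongr
    _ = S⁻¹ + S / (3 * Q) := by field_simp
    _ ≤ S⁻¹ + π ^ 2 / 12 := by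
      gcongr S⁻¹ + ?_; rw [div_le_div_iff₀ (by positivity) (by norm_num)]; linarith

end SumSinSq

theorem stmt4_general (d : ℕ) :
    ∃ c : ℝ, 0 < c ∧ ∀ n : ℕ, 1 ≤ n → ∀ w : Fin d → ℤ, w ≠ 0 →
      (∀ i, 2 * |w i| ≤ (n : ℤ)) →
      1 / (Real.pi ^ 2 * ∑ i, ((w i : ℝ)) ^ 2) ^ 2
          ≤ (n : ℝ)⁻¹ ^ 4 * ((∑ i, Real.sin (Real.pi * (w i : ℝ) / n) ^ 2) ^ 2)⁻¹ ∧
        (n : ℝ)⁻¹ ^ 4 * ((∑ i, Real.sin (Real.pi * (w i : ℝ) / n) ^ 2) ^ 2)⁻¹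
          ≤ (1 / (Real.pi ^ 2 * ∑ i, ((w i : ℝ)) ^ 2) + c / (n : ℝ) ^ 2) ^ 2 := by
  refine ⟨π ^ 2 / 12, by positivity, fun n hn w hw hwn ↦ ?_⟩
  have hn₀ : (0 : ℝ) < n := by exact_mod_cast hn
  set x : Fin d → ℝ := fun i ↦ π * w i / n
  have hx : ∀ i, |x i| ≤ π / 2 := fun i ↦ abs_pi_mul_div_le hn₀ (by exact_mod_cast hwn i)
  have hS : π ^ 2 * ∑ i, (w i : ℝ) ^ 2 = n ^ 2 * ∑ i, x i ^ 2 := by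
    simp only [x, mul_sum]; congr! 1 with i; field_simp
  have hS₀ : 0 < ∑ i, x i ^ 2 := by
    obtain ⟨i, hwi⟩ := Function.ne_iff.1 hw
    have hwi : (w i : ℝ) ≠ 0 := by exact_mod_cast hwi
    exact sum_pos' (fun i _ ↦ sq_nonneg _) ⟨i, mem_univ _, by positivity⟩
  have hQ₀ : 0 < ∑ i, sin (x i) ^ 2 :=
    lt_of_lt_of_le (by positivity) (mul_sum_sq_le_sum_sin_sq hx)
  have hlhs : (n : ℝ)⁻¹ ^ 4 * ((∑ i, sin (x i) ^ 2) ^ 2)⁻¹ =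
      (n ^ 2 * ∑ i, sin (x i) ^ 2)⁻¹ ^ 2 := by
    field_simp
  rw [hS, hlhs, one_div, one_div, ← inv_pow]
  constructor
  · gcongr ((n : ℝ) ^ 2 * ?_)⁻¹ ^ 2
    exact sum_le_sum fun i _ ↦ sin_sq_le_sq
  · gcongr
    calc (n ^ 2 * ∑ i, sin (x i) ^ 2)⁻¹ = ((n : ℝ) ^ 2)⁻¹ * (∑ i, sin (x i) ^ 2)⁻¹ :=
          mul_inv _ _
      _ ≤ ((n : ℝ) ^ 2)⁻¹ * ((∑ i, x i ^ 2)⁻¹ + π ^ 2 / 12) := by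
        gcongr; exact inv_sum_sin_sq_le hx hS₀
      _ = (n ^ 2 * ∑ i, x i ^ 2)⁻¹ + π ^ 2 / 12 / n ^ 2 := by field_simp

/-- Two-sided bound on the inverse squared discrete-Laplacian eigenvalues:
there is `c > 0` such that for all `n ∈ ℕ` and `w ∈ ℤ_n^d \ {0}`,
`1/‖πw‖⁴ ≤ n⁻⁴ (∑ᵢ sin²(πwᵢ/n))⁻² ≤ (1/‖πw‖² + c/n²)²`. -/
theorem stmt4 (d : ℕ) (hd : 1 ≤ d) :
    ∃ c : ℝ, 0 < c ∧ ∀ n : ℕ, 1 ≤ n → ∀ w : Fin d → ℤ, w ≠ 0 →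
      (∀ i, 2 * |w i| ≤ (n : ℤ)) →
      1 / (Real.pi ^ 2 * ∑ i, ((w i : ℝ)) ^ 2) ^ 2
          ≤ (n : ℝ)⁻¹ ^ 4 * ((∑ i, Real.sin (Real.pi * (w i : ℝ) / n) ^ 2) ^ 2)⁻¹ ∧
        (n : ℝ)⁻¹ ^ 4 * ((∑ i, Real.sin (Real.pi * (w i : ℝ) / n) ^ 2) ^ 2)⁻¹
          ≤ (1 / (Real.pi ^ 2 * ∑ i, ((w i : ℝ)) ^ 2) + c / (n : ℝ) ^ 2) ^ 2 :=
  stmt4_general d
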